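/- arXiv:1301.7483 — 5 statements merged into one kernel-verified Lean document; each statement's English description precedes it below -/
import Mathlib

section
/- Let ψ_1, ψ_2 : ℝ^2 → ℂ and A_1, A_2 : ℝ^2 → ℝ be smooth with D_j = ∂_j + i A_j, satisfying (D_1 + i D_2)ψ_1 = 0, (D_1 + i D_2)ψ_2 = 0, D_1 ψ_2 = D_2 ψ_1, and F_{12} := ∂_1 A_2 − ∂_2 A_1 nonzero at at least one point. Then ψ_1 = −i ψ_2 everywhere on ℝ^2. -/
noncomputable section
open Complex MeasureTheory Filter

/-- Partial derivative in the `x¹` direction on `ℝ × ℝ`. -/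
def q1 {E : Type*} [NormedAddCommGroup E] [NormedSpace ℝ E]
    (f : ℝ × ℝ → E) (p : ℝ × ℝ) : E := deriv (fun s => f (s, p.2)) p.1

/-- Partial derivative in the `x²` direction on `ℝ × ℝ`. -/
def q2 {E : Type*} [NormedAddCommGroup E] [NormedSpace ℝ E]
    (f : ℝ × ℝ → E) (p : ℝ × ℝ) : E := deriv (fun s => f (p.1, s)) p.2

/-- Covariant derivative `D₁ = ∂₁ + i A₁`. -/
def Dc1 (A1 : ℝ × ℝ → ℝ) (f : ℝ × ℝ → ℂ) (p : ℝ × ℝ) : ℂ :=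
  q1 f p + Complex.I * (A1 p : ℂ) * f p

/-- Covariant derivative `D₂ = ∂₂ + i A₂`. -/
def Dc2 (A2 : ℝ × ℝ → ℝ) (f : ℝ × ℝ → ℂ) (p : ℝ × ℝ) : ℂ :=
  q2 f p + Complex.I * (A2 p : ℂ) * f p

/-- Curvature `F₁₂ = ∂₁A₂ − ∂₂A₁`. -/
def curvF (A1 A2 : ℝ × ℝ → ℝ) (p : ℝ × ℝ) : ℝ := q1 A2 p - q2 A1 p

section helpers

variable {E : Type*} [NormedAddCommGroup E] [NormedSpace ℝ E]

lemma slice1_hasDerivAt (x y : ℝ) : HasDerivAt (fun s : ℝ => (s, y)) ((1:ℝ), (0:ℝ)) x :=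
  HasDerivAt.prodMk (hasDerivAt_id x) (hasDerivAt_const x y)

lemma slice2_hasDerivAt (x y : ℝ) : HasDerivAt (fun s : ℝ => (x, s)) ((0:ℝ), (1:ℝ)) y :=
  HasDerivAt.prodMk (hasDerivAt_const y x) (hasDerivAt_id y)

lemma hasDerivAt_q1 {f : ℝ × ℝ → E} {L : ℝ × ℝ →L[ℝ] E} {p : ℝ × ℝ}
    (h : HasFDerivAt f L p) : HasDerivAt (fun s => f (s, p.2)) (L ((1:ℝ), (0:ℝ))) p.1 :=
  h.comp_hasDerivAt p.1 (slice1_hasDerivAt p.1 p.2)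

lemma hasDerivAt_q2 {f : ℝ × ℝ → E} {L : ℝ × ℝ →L[ℝ] E} {p : ℝ × ℝ}
    (h : HasFDerivAt f L p) : HasDerivAt (fun s => f (p.1, s)) (L ((0:ℝ), (1:ℝ))) p.2 :=
  h.comp_hasDerivAt p.2 (slice2_hasDerivAt p.1 p.2)

lemma q1_eq {f : ℝ × ℝ → E} {L : ℝ × ℝ →L[ℝ] E} {p : ℝ × ℝ}
    (h : HasFDerivAt f L p) : q1 f p = L ((1:ℝ), (0:ℝ)) :=
  (hasDerivAt_q1 h).deriv

lemma q2_eq {f : ℝ × ℝ → E} {L : ℝ × ℝ →L[ℝ] E} {p : ℝ × ℝ}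
    (h : HasFDerivAt f L p) : q2 f p = L ((0:ℝ), (1:ℝ)) :=
  (hasDerivAt_q2 h).deriv

lemma diff_hasDerivAt_q1 {f : ℝ × ℝ → E} (hf : Differentiable ℝ f) (p : ℝ × ℝ) :
    HasDerivAt (fun s => f (s, p.2)) (q1 f p) p.1 :=
  (q1_eq (hf p).hasFDerivAt) ▸ hasDerivAt_q1 (hf p).hasFDerivAt

lemma diff_hasDerivAt_q2 {f : ℝ × ℝ → E} (hf : Differentiable ℝ f) (p : ℝ × ℝ) :
    HasDerivAt (fun s => f (p.1, s)) (q2 f p) p.2 :=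
  (q2_eq (hf p).hasFDerivAt) ▸ hasDerivAt_q2 (hf p).hasFDerivAt

end helpers

theorem stmt4 (ψ1 ψ2 : ℝ × ℝ → ℂ) (A1 A2 : ℝ × ℝ → ℝ)
    (hψ1 : ContDiff ℝ (⊤ : ℕ∞) ψ1) (hψ2 : ContDiff ℝ (⊤ : ℕ∞) ψ2)
    (hA1 : ContDiff ℝ (⊤ : ℕ∞) A1) (hA2 : ContDiff ℝ (⊤ : ℕ∞) A2)
    (hsd1 : ∀ p, Dc1 A1 ψ1 p + Complex.I * Dc2 A2 ψ1 p = 0)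
    (hsd2 : ∀ p, Dc1 A1 ψ2 p + Complex.I * Dc2 A2 ψ2 p = 0)
    (hcomp : ∀ p, Dc1 A1 ψ2 p = Dc2 A2 ψ1 p)
    (hF : ∃ p : ℝ × ℝ, curvF A1 A2 p ≠ 0) :
    ∀ p : ℝ × ℝ, ψ1 p = -Complex.I * ψ2 p := by
  classical
  set φ : ℝ × ℝ → ℂ := fun p => ψ1 p + Complex.I * ψ2 p with hφdef
  have hφ : ContDiff ℝ (⊤ : ℕ∞) φ := hψ1.add (contDiff_const.mul hψ2)
  have hdφ : Differentiable ℝ φ := hφ.differentiable (by simp)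
  have hdψ1 : Differentiable ℝ ψ1 := hψ1.differentiable (by simp)
  have hdψ2 : Differentiable ℝ ψ2 := hψ2.differentiable (by simp)
  have hdA1 : Differentiable ℝ A1 := hA1.differentiable (by simp)
  have hdA2 : Differentiable ℝ A2 := hA2.differentiable (by simp)
  -- D₁ φ = 0
  have step1 : ∀ p, q1 φ p = -Complex.I * (A1 p : ℂ) * φ p := by
    intro p
    have h1 := diff_hasDerivAt_q1 hdψ1 p
    have h2 := diff_hasDerivAt_q1 hdψ2 p
    have h : HasDerivAt (fun s => φ (s, p.2)) (q1 ψ1 p + Complex.I * q1 ψ2 p) p.1 :=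
      h1.add (h2.const_mul Complex.I)
    have hq : q1 φ p = q1 ψ1 p + Complex.I * q1 ψ2 p := h.deriv
    have e1 := hsd1 p
    have e2 := hcomp p
    simp only [Dc1, Dc2] at e1 e2
    rw [hq, hφdef]
    linear_combination e1 + Complex.I * e2
  -- D₂ φ = 0
  have step2 : ∀ p, q2 φ p = -Complex.I * (A2 p : ℂ) * φ p := by
    intro p
    have h1 := diff_hasDerivAt_q2 hdψ1 p
    have h2 := diff_hasDerivAt_q2 hdψ2 p
    have h : HasDerivAt (fun s => φ (p.1, s)) (q2 ψ1 p + Complex.I * q2 ψ2 p) p.2 :=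
      h1.add (h2.const_mul Complex.I)
    have hq : q2 φ p = q2 ψ1 p + Complex.I * q2 ψ2 p := h.deriv
    have e1 := hsd2 p
    have e2 := hcomp p
    simp only [Dc1, Dc2] at e1 e2
    rw [hq, hφdef]
    linear_combination e1 - e2
  -- full derivative of φ
  have step3 : ∀ p (v : ℝ × ℝ),
      fderiv ℝ φ p v = -Complex.I * ((v.1 * A1 p + v.2 * A2 p : ℝ) : ℂ) * φ p := by
    intro p v
    have hL := (hdφ p).hasFDerivAt
    have e1 : fderiv ℝ φ p ((1:ℝ), (0:ℝ)) = q1 φ p := (q1_eq hL).symm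
    have e2 : fderiv ℝ φ p ((0:ℝ), (1:ℝ)) = q2 φ p := (q2_eq hL).symm
    have hv : (v : ℝ × ℝ) = v.1 • ((1:ℝ), (0:ℝ)) + v.2 • ((0:ℝ), (1:ℝ)) := by
      simp [Prod.ext_iff]
    rw [hv, map_add, (fderiv ℝ φ p).map_smul, (fderiv ℝ φ p).map_smul, e1, e2, step1 p, step2 p]
    simp only [Prod.smul_mk, Prod.mk_add_mk, smul_eq_mul, mul_one, mul_zero, add_zero, zero_add]
    push_cast
    simp only [Complex.real_smul]
    ring
  -- |φ|² is constant
  have hg0 : ∀ p, HasFDerivAt (fun q => Complex.normSq (φ q)) (0 : ℝ × ℝ →L[ℝ] ℝ) p := by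
    intro p
    have hL := (hdφ p).hasFDerivAt
    have hre : HasFDerivAt (fun q => (φ q).re) (Complex.reCLM.comp (fderiv ℝ φ p)) p :=
      (Complex.reCLM.hasFDerivAt).comp p hL
    have him : HasFDerivAt (fun q => (φ q).im) (Complex.imCLM.comp (fderiv ℝ φ p)) p :=
      (Complex.imCLM.hasFDerivAt).comp p hL
    have hmul := (hre.mul hre).add (him.mul him)
    have hfun : (fun q => Complex.normSq (φ q)) =
        fun q => (φ q).re * (φ q).re + (φ q).im * (φ q).im := by
      funext q; exact Complex.normSq_apply _
    rw [hfun]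
    refine hmul.congr_fderiv ?_
    refine (ContinuousLinearMap.ext fun v => ?_)
    have hv := step3 p v
    simp only [ContinuousLinearMap.zero_apply, ContinuousLinearMap.add_apply,
      ContinuousLinearMap.smul_apply, ContinuousLinearMap.coe_comp', Function.comp_apply,
      Complex.reCLM_apply, Complex.imCLM_apply, smul_eq_mul, hv]
    simp only [Complex.mul_re, Complex.mul_im, Complex.neg_re, Complex.neg_im,
      Complex.I_re, Complex.I_im, Complex.ofReal_re, Complex.ofReal_im]
    ring
  have hgdiff : Differentiable ℝ (fun q => Complex.normSq (φ q)) :=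
    fun p => (hg0 p).differentiableAt
  have hgconst := is_const_of_fderiv_eq_zero (𝕜 := ℝ) hgdiff (fun p => (hg0 p).fderiv)
  -- φ vanishes at the point where the curvature is nonzero
  obtain ⟨p0, hp0⟩ := hF
  have hFd : ∀ y, HasFDerivAt φ (fderiv ℝ φ y) y := fun y => (hdφ y).hasFDerivAt
  have hFc : ContDiff ℝ (⊤ : ℕ∞) (fderiv ℝ φ) := hφ.fderiv_right (by simp)
  have hFdiff : Differentiable ℝ (fderiv ℝ φ) := hFc.differentiable (by simp)
  have hFF : HasFDerivAt (fderiv ℝ φ) (fderiv ℝ (fderiv ℝ φ) p0) p0 := (hFdiff p0).hasFDerivAt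
  have hsymm := second_derivative_symmetric hFd hFF ((1:ℝ), (0:ℝ)) ((0:ℝ), (1:ℝ))
  have key : ∀ v : ℝ × ℝ, HasFDerivAt (fun q => fderiv ℝ φ q v)
      ((ContinuousLinearMap.apply ℝ ℂ v).comp (fderiv ℝ (fderiv ℝ φ) p0)) p0 :=
    fun v => ((ContinuousLinearMap.apply ℝ ℂ v).hasFDerivAt).comp p0 hFF
  -- the two mixed partial derivative computations
  have eA : q1 (fun q => -Complex.I * (A2 q : ℂ) * φ q) p0 =
      fderiv ℝ (fderiv ℝ φ) p0 ((1:ℝ), (0:ℝ)) ((0:ℝ), (1:ℝ)) := by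
    have h1 : (fun q => -Complex.I * (A2 q : ℂ) * φ q) =
        fun q => fderiv ℝ φ q ((0:ℝ), (1:ℝ)) := by
      funext q; exact ((step2 q).symm.trans (q2_eq (hFd q)))
    rw [h1, q1_eq (key ((0:ℝ), (1:ℝ)))]
    simp [ContinuousLinearMap.comp_apply, ContinuousLinearMap.apply_apply]
  have eB : q2 (fun q => -Complex.I * (A1 q : ℂ) * φ q) p0 =
      fderiv ℝ (fderiv ℝ φ) p0 ((0:ℝ), (1:ℝ)) ((1:ℝ), (0:ℝ)) := by
    have h1 : (fun q => -Complex.I * (A1 q : ℂ) * φ q) =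
        fun q => fderiv ℝ φ q ((1:ℝ), (0:ℝ)) := by
      funext q; exact ((step1 q).symm.trans (q1_eq (hFd q)))
    rw [h1, q2_eq (key ((1:ℝ), (0:ℝ)))]
    simp [ContinuousLinearMap.comp_apply, ContinuousLinearMap.apply_apply]
  -- direct computation of those quantities via the product rule
  have c1 : HasDerivAt (fun s => ((A2 (s, p0.2) : ℝ) : ℂ)) (((q1 A2 p0 : ℝ) : ℂ)) p0.1 :=
    (diff_hasDerivAt_q1 hdA2 p0).ofReal_comp
  have c2 : HasDerivAt (fun s => φ (s, p0.2)) (q1 φ p0) p0.1 := diff_hasDerivAt_q1 hdφ p0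
  have c3 : HasDerivAt (fun s => -Complex.I * ((A2 (s, p0.2) : ℂ) * φ (s, p0.2)))
      (-Complex.I * (((q1 A2 p0 : ℝ) : ℂ) * φ p0 + (A2 p0 : ℂ) * q1 φ p0)) p0.1 :=
    (c1.mul c2).const_mul (-Complex.I)
  have vA : q1 (fun q => -Complex.I * (A2 q : ℂ) * φ q) p0 =
      -Complex.I * (((q1 A2 p0 : ℝ) : ℂ) * φ p0 + (A2 p0 : ℂ) * q1 φ p0) := by
    have hfe : (fun s => -Complex.I * (A2 (s, p0.2) : ℂ) * φ (s, p0.2)) =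
        fun s => -Complex.I * ((A2 (s, p0.2) : ℂ) * φ (s, p0.2)) := by
      funext s; ring
    show deriv (fun s => -Complex.I * (A2 (s, p0.2) : ℂ) * φ (s, p0.2)) p0.1 = _
    rw [hfe]
    exact c3.deriv
  have d1 : HasDerivAt (fun s => ((A1 (p0.1, s) : ℝ) : ℂ)) (((q2 A1 p0 : ℝ) : ℂ)) p0.2 :=
    (diff_hasDerivAt_q2 hdA1 p0).ofReal_comp
  have d2 : HasDerivAt (fun s => φ (p0.1, s)) (q2 φ p0) p0.2 := diff_hasDerivAt_q2 hdφ p0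
  have d3 : HasDerivAt (fun s => -Complex.I * ((A1 (p0.1, s) : ℂ) * φ (p0.1, s)))
      (-Complex.I * (((q2 A1 p0 : ℝ) : ℂ) * φ p0 + (A1 p0 : ℂ) * q2 φ p0)) p0.2 :=
    (d1.mul d2).const_mul (-Complex.I)
  have vB : q2 (fun q => -Complex.I * (A1 q : ℂ) * φ q) p0 =
      -Complex.I * (((q2 A1 p0 : ℝ) : ℂ) * φ p0 + (A1 p0 : ℂ) * q2 φ p0) := by
    have hfe : (fun s => -Complex.I * (A1 (p0.1, s) : ℂ) * φ (p0.1, s)) =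
        fun s => -Complex.I * ((A1 (p0.1, s) : ℂ) * φ (p0.1, s)) := by
      funext s; ring
    show deriv (fun s => -Complex.I * (A1 (p0.1, s) : ℂ) * φ (p0.1, s)) p0.2 = _
    rw [hfe]
    exact d3.deriv
  have E2 : -Complex.I * (((q1 A2 p0 : ℝ) : ℂ) * φ p0 + (A2 p0 : ℂ) * (-Complex.I * (A1 p0 : ℂ) * φ p0)) =
      -Complex.I * (((q2 A1 p0 : ℝ) : ℂ) * φ p0 + (A1 p0 : ℂ) * (-Complex.I * (A2 p0 : ℂ) * φ p0)) := by
    have h := ((vA.symm.trans eA).trans hsymm).trans (eB.symm.trans vB)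
    rw [step1 p0, step2 p0] at h
    exact h
  have hz : (((q1 A2 p0 : ℝ) : ℂ) - ((q2 A1 p0 : ℝ) : ℂ)) * φ p0 = 0 := by
    linear_combination Complex.I * E2 +
      (((q1 A2 p0 : ℝ) : ℂ) - ((q2 A1 p0 : ℝ) : ℂ)) * (φ p0) * Complex.I_mul_I
  have hφ0 : φ p0 = 0 := by
    have hcne : (((q1 A2 p0 : ℝ) : ℂ) - ((q2 A1 p0 : ℝ) : ℂ)) ≠ 0 := by
      rw [← Complex.ofReal_sub]
      exact Complex.ofReal_ne_zero.2 hp0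
    exact (mul_eq_zero.1 hz).resolve_left hcne
  -- conclude
  intro p
  have hgp : Complex.normSq (φ p) = Complex.normSq (φ p0) := hgconst p p0
  rw [hφ0, map_zero] at hgp
  have hφp : φ p = 0 := by
    have := Complex.normSq_eq_zero.1 hgp
    exact this
  have : ψ1 p + Complex.I * ψ2 p = 0 := hφp
  linear_combination this
end
end

section
/- Let ψ_1, ψ_2 : ℝ^2 → ℂ and A_1, A_2 : ℝ^2 → ℝ be smooth satisfying (D_1 + i D_2)ψ_k = 0 for k = 1, 2, D_1 ψ_2 = D_2 ψ_1, and F_{12} nonvanishing at some point. Then D_1 ψ_1 + D_2 ψ_2 = 0, i.e. (ψ, A) satisfies the gauged harmonic map equation. -/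
noncomputable section
open Complex MeasureTheory Filter

theorem stmt5 (ψ1 ψ2 : ℝ × ℝ → ℂ) (A1 A2 : ℝ × ℝ → ℝ)
    (hψ1 : ContDiff ℝ (⊤ : ℕ∞) ψ1) (hψ2 : ContDiff ℝ (⊤ : ℕ∞) ψ2)
    (hA1 : ContDiff ℝ (⊤ : ℕ∞) A1) (hA2 : ContDiff ℝ (⊤ : ℕ∞) A2)
    (hsd1 : ∀ p, Dc1 A1 ψ1 p + Complex.I * Dc2 A2 ψ1 p = 0)
    (hsd2 : ∀ p, Dc1 A1 ψ2 p + Complex.I * Dc2 A2 ψ2 p = 0)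
    (hcomp : ∀ p, Dc1 A1 ψ2 p = Dc2 A2 ψ1 p)
    (hF : ∃ p : ℝ × ℝ, curvF A1 A2 p ≠ 0) :
    ∀ p : ℝ × ℝ, Dc1 A1 ψ1 p + Dc2 A2 ψ2 p = 0 := by
  intro p
  linear_combination hsd1 p + Complex.I * hcomp p - Complex.I * hsd2 p + Dc2 A2 ψ2 p * Complex.I_sq
end
end

section
/- Let ψ_1, ψ_2 : ℝ^2 → ℂ and A_1, A_2 : ℝ^2 → ℝ be smooth satisfying D_1 ψ_2 = D_2 ψ_1 and F_{12} = μ Im(conj(ψ_2) ψ_1). Then pointwise: −Im(conj(D_j ψ_2) D_j ψ_1) + (1/2)(|ψ_1|^2 + |ψ_2|^2) F_{12} = (1/2)( ∂_1 Im(conj(ψ_j) D_2 ψ_j) − ∂_2 Im(conj(ψ_j) D_1 ψ_j) ), with summation over j = 1, 2. -/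
noncomputable section
open Complex MeasureTheory Filter

section Aux

variable {E : Type*} [NormedAddCommGroup E] [NormedSpace ℝ E]

lemma aux_line1 {f : ℝ × ℝ → E} (hf : ContDiff ℝ (⊤ : ℕ∞) f) (p : ℝ × ℝ) :
    HasDerivAt (fun s => f (s, p.2)) (fderiv ℝ f p ((1:ℝ), (0:ℝ))) p.1 := by
  have h : HasDerivAt (fun s : ℝ => (s, p.2)) ((1:ℝ), (0:ℝ)) p.1 :=
    HasDerivAt.prodMk (hasDerivAt_id p.1) (hasDerivAt_const p.1 p.2)
  simpa [Function.comp_def] using ((hf.differentiable (by simp) p).hasFDerivAt.comp_hasDerivAt p.1 h)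

lemma aux_line2 {f : ℝ × ℝ → E} (hf : ContDiff ℝ (⊤ : ℕ∞) f) (p : ℝ × ℝ) :
    HasDerivAt (fun s => f (p.1, s)) (fderiv ℝ f p ((0:ℝ), (1:ℝ))) p.2 := by
  have h : HasDerivAt (fun s : ℝ => (p.1, s)) ((0:ℝ), (1:ℝ)) p.2 :=
    HasDerivAt.prodMk (hasDerivAt_const p.2 p.1) (hasDerivAt_id p.2)
  simpa [Function.comp_def] using ((hf.differentiable (by simp) p).hasFDerivAt.comp_hasDerivAt p.2 h)

lemma aux_q1_eq {f : ℝ × ℝ → E} (hf : ContDiff ℝ (⊤ : ℕ∞) f) (p : ℝ × ℝ) :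
    q1 f p = fderiv ℝ f p ((1:ℝ), (0:ℝ)) := (aux_line1 hf p).deriv

lemma aux_q2_eq {f : ℝ × ℝ → E} (hf : ContDiff ℝ (⊤ : ℕ∞) f) (p : ℝ × ℝ) :
    q2 f p = fderiv ℝ f p ((0:ℝ), (1:ℝ)) := (aux_line2 hf p).deriv

lemma aux_line1' {f : ℝ × ℝ → E} (hf : ContDiff ℝ (⊤ : ℕ∞) f) (p : ℝ × ℝ) :
    HasDerivAt (fun s => f (s, p.2)) (q1 f p) p.1 := by
  rw [aux_q1_eq hf p]; exact aux_line1 hf p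

lemma aux_line2' {f : ℝ × ℝ → E} (hf : ContDiff ℝ (⊤ : ℕ∞) f) (p : ℝ × ℝ) :
    HasDerivAt (fun s => f (p.1, s)) (q2 f p) p.2 := by
  rw [aux_q2_eq hf p]; exact aux_line2 hf p

lemma aux_q1_contDiff {f : ℝ × ℝ → E} (hf : ContDiff ℝ (⊤ : ℕ∞) f) : ContDiff ℝ (⊤ : ℕ∞) (q1 f) := by
  have : q1 f = fun p => fderiv ℝ f p ((1:ℝ), (0:ℝ)) := funext fun p => aux_q1_eq hf p
  rw [this]
  exact (hf.fderiv_right (by simp)).clm_apply contDiff_const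

lemma aux_q2_contDiff {f : ℝ × ℝ → E} (hf : ContDiff ℝ (⊤ : ℕ∞) f) : ContDiff ℝ (⊤ : ℕ∞) (q2 f) := by
  have : q2 f = fun p => fderiv ℝ f p ((0:ℝ), (1:ℝ)) := funext fun p => aux_q2_eq hf p
  rw [this]
  exact (hf.fderiv_right (by simp)).clm_apply contDiff_const

lemma aux_clairaut {f : ℝ × ℝ → E} (hf : ContDiff ℝ (⊤ : ℕ∞) f) (p : ℝ × ℝ) :
    q1 (q2 f) p = q2 (q1 f) p := by
  have hdf : ContDiff ℝ (⊤ : ℕ∞) (fderiv ℝ f) := hf.fderiv_right (by simp)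
  have hsymm : ∀ v w, fderiv ℝ (fderiv ℝ f) p v w = fderiv ℝ (fderiv ℝ f) p w v := by
    intro v w
    exact second_derivative_symmetric (fun y => (hf.differentiable (by simp) y).hasFDerivAt)
      ((hdf.differentiable (by simp) p).hasFDerivAt) v w
  have e2 : q2 f = fun q => fderiv ℝ f q ((0:ℝ), (1:ℝ)) := funext fun q => aux_q2_eq hf q
  have e1 : q1 f = fun q => fderiv ℝ f q ((1:ℝ), (0:ℝ)) := funext fun q => aux_q1_eq hf q
  rw [aux_q1_eq (aux_q2_contDiff hf) p, aux_q2_eq (aux_q1_contDiff hf) p, e1, e2]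
  rw [fderiv_clm_apply ((hdf.differentiable (by simp) p)) (differentiableAt_const _),
      fderiv_clm_apply ((hdf.differentiable (by simp) p)) (differentiableAt_const _)]
  simp [hsymm]

end Aux

lemma HasDerivAt.cim {f : ℝ → ℂ} {f' : ℂ} {x : ℝ} (h : HasDerivAt f f' x) :
    HasDerivAt (fun s => (f s).im) f'.im x :=
  (Complex.imCLM.hasFDerivAt.comp_hasDerivAt x h)

lemma HasDerivAt.creal {f : ℝ → ℝ} {f' : ℝ} {x : ℝ} (h : HasDerivAt f f' x) :
    HasDerivAt (fun s => ((f s : ℂ))) ((f' : ℂ)) x :=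
  (Complex.ofRealCLM.hasFDerivAt.comp_hasDerivAt x h)

lemma keyD1 (A : ℝ × ℝ → ℝ) (f : ℝ × ℝ → ℂ) (hA : ContDiff ℝ (⊤ : ℕ∞) A) (hf : ContDiff ℝ (⊤ : ℕ∞) f)
    (p : ℝ × ℝ) :
    HasDerivAt (fun s => ((starRingEnd ℂ) (f (s, p.2)) * Dc2 A f (s, p.2)).im)
      (((starRingEnd ℂ) (q1 f p) * Dc2 A f p
        + (starRingEnd ℂ) (f p) * (q1 (q2 f) p
            + (Complex.I * ((q1 A p : ℝ) : ℂ) * f p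
              + Complex.I * (A p : ℂ) * q1 f p))).im) p.1 := by
  have hfl := aux_line1' hf p
  have hq2l := aux_line1' (aux_q2_contDiff hf) p
  have hAl := (aux_line1' hA p).creal
  have hIA : HasDerivAt (fun s => Complex.I * ((A (s, p.2) : ℂ)))
      (Complex.I * ((q1 A p : ℝ) : ℂ)) p.1 := hAl.const_mul Complex.I
  have hIAf := hIA.mul hfl
  have hD : HasDerivAt (fun s => Dc2 A f (s, p.2))
      (q1 (q2 f) p + (Complex.I * ((q1 A p : ℝ) : ℂ) * f p
        + Complex.I * (A p : ℂ) * q1 f p)) p.1 := hq2l.add hIAf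
  have h := (hfl.star.mul hD).cim
  simp only [starRingEnd_apply]
  exact h

lemma keyD2 (A : ℝ × ℝ → ℝ) (f : ℝ × ℝ → ℂ) (hA : ContDiff ℝ (⊤ : ℕ∞) A) (hf : ContDiff ℝ (⊤ : ℕ∞) f)
    (p : ℝ × ℝ) :
    HasDerivAt (fun s => ((starRingEnd ℂ) (f (p.1, s)) * Dc1 A f (p.1, s)).im)
      (((starRingEnd ℂ) (q2 f p) * Dc1 A f p
        + (starRingEnd ℂ) (f p) * (q2 (q1 f) p
            + (Complex.I * ((q2 A p : ℝ) : ℂ) * f p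
              + Complex.I * (A p : ℂ) * q2 f p))).im) p.2 := by
  have hfl := aux_line2' hf p
  have hq1l := aux_line2' (aux_q1_contDiff hf) p
  have hAl := (aux_line2' hA p).creal
  have hIA : HasDerivAt (fun s => Complex.I * ((A (p.1, s) : ℂ)))
      (Complex.I * ((q2 A p : ℝ) : ℂ)) p.2 := hAl.const_mul Complex.I
  have hIAf := hIA.mul hfl
  have hD : HasDerivAt (fun s => Dc1 A f (p.1, s))
      (q2 (q1 f) p + (Complex.I * ((q2 A p : ℝ) : ℂ) * f p
        + Complex.I * (A p : ℂ) * q2 f p)) p.2 := hq1l.add hIAf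
  have h := (hfl.star.mul hD).cim
  simp only [starRingEnd_apply]
  exact h

theorem stmt10 (ψ1 ψ2 : ℝ × ℝ → ℂ) (A1 A2 : ℝ × ℝ → ℝ) (μ : ℝ)
    (hμ : μ = 1 ∨ μ = -1)
    (hψ1 : ContDiff ℝ (⊤ : ℕ∞) ψ1) (hψ2 : ContDiff ℝ (⊤ : ℕ∞) ψ2)
    (hA1 : ContDiff ℝ (⊤ : ℕ∞) A1) (hA2 : ContDiff ℝ (⊤ : ℕ∞) A2)
    (hcomp : ∀ p, Dc1 A1 ψ2 p = Dc2 A2 ψ1 p)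
    (hcurv : ∀ p, curvF A1 A2 p = μ * ((starRingEnd ℂ) (ψ2 p) * ψ1 p).im) :
    ∀ p : ℝ × ℝ,
      -(((starRingEnd ℂ) (Dc1 A1 ψ2 p) * Dc1 A1 ψ1 p).im
          + ((starRingEnd ℂ) (Dc2 A2 ψ2 p) * Dc2 A2 ψ1 p).im)
        + (1 / 2) * (Complex.normSq (ψ1 p) + Complex.normSq (ψ2 p)) * curvF A1 A2 p
      = (1 / 2) * ( q1 (fun q => ((starRingEnd ℂ) (ψ1 q) * Dc2 A2 ψ1 q).im
            + ((starRingEnd ℂ) (ψ2 q) * Dc2 A2 ψ2 q).im) p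
          - q2 (fun q => ((starRingEnd ℂ) (ψ1 q) * Dc1 A1 ψ1 q).im
            + ((starRingEnd ℂ) (ψ2 q) * Dc1 A1 ψ2 q).im) p ) := by
  intro p
  have e1 : q1 (fun q => ((starRingEnd ℂ) (ψ1 q) * Dc2 A2 ψ1 q).im
      + ((starRingEnd ℂ) (ψ2 q) * Dc2 A2 ψ2 q).im) p
      = ((starRingEnd ℂ) (q1 ψ1 p) * Dc2 A2 ψ1 p
        + (starRingEnd ℂ) (ψ1 p) * (q1 (q2 ψ1) p
            + (Complex.I * ((q1 A2 p : ℝ) : ℂ) * ψ1 p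
              + Complex.I * (A2 p : ℂ) * q1 ψ1 p))).im
        + ((starRingEnd ℂ) (q1 ψ2 p) * Dc2 A2 ψ2 p
        + (starRingEnd ℂ) (ψ2 p) * (q1 (q2 ψ2) p
            + (Complex.I * ((q1 A2 p : ℝ) : ℂ) * ψ2 p
              + Complex.I * (A2 p : ℂ) * q1 ψ2 p))).im :=
    ((keyD1 A2 ψ1 hA2 hψ1 p).add (keyD1 A2 ψ2 hA2 hψ2 p)).deriv
  have e2 : q2 (fun q => ((starRingEnd ℂ) (ψ1 q) * Dc1 A1 ψ1 q).im
      + ((starRingEnd ℂ) (ψ2 q) * Dc1 A1 ψ2 q).im) p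
      = ((starRingEnd ℂ) (q2 ψ1 p) * Dc1 A1 ψ1 p
        + (starRingEnd ℂ) (ψ1 p) * (q2 (q1 ψ1) p
            + (Complex.I * ((q2 A1 p : ℝ) : ℂ) * ψ1 p
              + Complex.I * (A1 p : ℂ) * q2 ψ1 p))).im
        + ((starRingEnd ℂ) (q2 ψ2 p) * Dc1 A1 ψ2 p
        + (starRingEnd ℂ) (ψ2 p) * (q2 (q1 ψ2) p
            + (Complex.I * ((q2 A1 p : ℝ) : ℂ) * ψ2 p
              + Complex.I * (A1 p : ℂ) * q2 ψ2 p))).im :=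
    ((keyD2 A1 ψ1 hA1 hψ1 p).add (keyD2 A1 ψ2 hA1 hψ2 p)).deriv
  rw [e1, e2, aux_clairaut hψ1 p, aux_clairaut hψ2 p]
  have hc : q1 ψ2 p = q2 ψ1 p + Complex.I * (A2 p : ℂ) * ψ1 p
      - Complex.I * (A1 p : ℂ) * ψ2 p := by
    have h := hcomp p
    simp only [Dc1, Dc2] at h
    linear_combination h
  simp only [Dc1, Dc2, curvF, hc]
  simp only [Complex.add_im, Complex.add_re, Complex.sub_im, Complex.sub_re,
    Complex.mul_im, Complex.mul_re, Complex.I_re, Complex.I_im,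
    Complex.ofReal_re, Complex.ofReal_im, Complex.conj_re, Complex.conj_im,
    Complex.normSq_apply]
  ring
end
end

section
/- Let ψ_1, ψ_2, A_1, A_2 be smooth on ℝ^2, satisfying D_1 ψ_2 = D_2 ψ_1 and F_{12} = μ Im(conj(ψ_2) ψ_1), with all fields and derivatives rapidly decaying. Then the Hamiltonian H = ∫_{ℝ^2} ( −Im(conj(D_j ψ_2) D_j ψ_1) + (1/2)(|ψ_1|^2 + |ψ_2|^2) F_{12} ) dx equals zero. -/
noncomputable section
open Complex MeasureTheory Filter

section helpers

variable {E : Type*} [NormedAddCommGroup E] [NormedSpace ℝ E]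

lemma hasDerivAt_slice1 {f : ℝ × ℝ → E} {x y : ℝ} (hf : DifferentiableAt ℝ f (x, y)) :
    HasDerivAt (fun s => f (s, y)) (fderiv ℝ f (x, y) (1, 0)) x := by
  have h : HasDerivAt (fun s : ℝ => (s, y)) ((1:ℝ), (0:ℝ)) x :=
    (hasDerivAt_id x).prodMk (hasDerivAt_const x y)
  exact hf.hasFDerivAt.comp_hasDerivAt x h

lemma hasDerivAt_slice2 {f : ℝ × ℝ → E} {x y : ℝ} (hf : DifferentiableAt ℝ f (x, y)) :
    HasDerivAt (fun s => f (x, s)) (fderiv ℝ f (x, y) (0, 1)) y := by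
  have h : HasDerivAt (fun s : ℝ => (x, s)) ((0:ℝ), (1:ℝ)) y :=
    (hasDerivAt_const y x).prodMk (hasDerivAt_id y)
  exact hf.hasFDerivAt.comp_hasDerivAt y h

lemma q1_eq_s11 {f : ℝ × ℝ → E} {p : ℝ × ℝ} (hf : DifferentiableAt ℝ f p) :
    q1 f p = fderiv ℝ f p (1, 0) := by
  obtain ⟨x, y⟩ := p
  exact (hasDerivAt_slice1 hf).deriv

lemma q2_eq_s11 {f : ℝ × ℝ → E} {p : ℝ × ℝ} (hf : DifferentiableAt ℝ f p) :
    q2 f p = fderiv ℝ f p (0, 1) := by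
  obtain ⟨x, y⟩ := p
  exact (hasDerivAt_slice2 hf).deriv

lemma q1_add {f g : ℝ × ℝ → E} {p : ℝ × ℝ} (hf : DifferentiableAt ℝ f p)
    (hg : DifferentiableAt ℝ g p) :
    q1 (fun q => f q + g q) p = q1 f p + q1 g p := by
  rw [q1_eq_s11 (hf.fun_add hg), q1_eq_s11 hf, q1_eq_s11 hg, fderiv_fun_add hf hg]
  rfl

lemma q2_add {f g : ℝ × ℝ → E} {p : ℝ × ℝ} (hf : DifferentiableAt ℝ f p)
    (hg : DifferentiableAt ℝ g p) :
    q2 (fun q => f q + g q) p = q2 f p + q2 g p := by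
  rw [q2_eq_s11 (hf.fun_add hg), q2_eq_s11 hf, q2_eq_s11 hg, fderiv_fun_add hf hg]
  rfl

end helpers

lemma oneD_zero {g g' : ℝ → ℝ} (hd : ∀ x, HasDerivAt g (g' x) x)
    (hi : Integrable g') (h1 : Tendsto g atBot (nhds 0)) (h2 : Tendsto g atTop (nhds 0)) :
    ∫ x, g' x = 0 := by
  rw [← intervalIntegral.integral_Iic_add_Ioi (b := (0:ℝ)) hi.integrableOn hi.integrableOn]
  rw [MeasureTheory.integral_Iic_of_hasDerivAt_of_tendsto
      (hd 0).continuousAt.continuousWithinAt (fun x _ => hd x) hi.integrableOn h1,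
    MeasureTheory.integral_Ioi_of_hasDerivAt_of_tendsto
      (hd 0).continuousAt.continuousWithinAt (fun x _ => hd x) hi.integrableOn h2]
  ring

lemma tendsto_line1 (y : ℝ) :
    Tendsto (fun x : ℝ => (x, y)) (atBot ⊔ atTop) (cocompact (ℝ × ℝ)) := by
  have hiso : Isometry (fun x : ℝ => (x, y)) := fun a b => by
    simp [Prod.edist_eq, edist_comm]
  exact (cocompact_eq_atBot_atTop (α := ℝ)) ▸ hiso.isClosedEmbedding.tendsto_cocompact

lemma tendsto_line2 (x : ℝ) :
    Tendsto (fun y : ℝ => (x, y)) (atBot ⊔ atTop) (cocompact (ℝ × ℝ)) := by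
  have hiso : Isometry (fun s : ℝ => (x, s)) := fun a b => by
    simp [Prod.edist_eq, edist_comm]
  exact (cocompact_eq_atBot_atTop (α := ℝ)) ▸ hiso.isClosedEmbedding.tendsto_cocompact

lemma int_q1_zero {f : ℝ × ℝ → ℝ} (hf : ContDiff ℝ (⊤ : ℕ∞) f)
    (hi : Integrable (q1 f)) (hdec : Tendsto f (cocompact (ℝ × ℝ)) (nhds 0)) :
    ∫ p : ℝ × ℝ, q1 f p = 0 := by
  have hi' : Integrable (q1 f) ((volume : Measure ℝ).prod volume) := by
    rwa [← Measure.volume_eq_prod]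
  rw [Measure.volume_eq_prod, MeasureTheory.integral_prod_symm _ hi']
  rw [← MeasureTheory.integral_zero ℝ ℝ]
  refine integral_congr_ae ?_
  filter_upwards [hi'.prod_left_ae] with y hy
  refine oneD_zero (g := fun x => f (x, y)) (fun x => ?_) hy ?_ ?_
  · exact hasDerivAt_slice1 ((hf.differentiable (by simp)) (x, y)) |>.congr_deriv
      (by rw [← q1_eq_s11 ((hf.differentiable (by simp)) (x, y))])
  · exact hdec.comp ((tendsto_line1 y).mono_left le_sup_left)
  · exact hdec.comp ((tendsto_line1 y).mono_left le_sup_right)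

lemma int_q2_zero {f : ℝ × ℝ → ℝ} (hf : ContDiff ℝ (⊤ : ℕ∞) f)
    (hi : Integrable (q2 f)) (hdec : Tendsto f (cocompact (ℝ × ℝ)) (nhds 0)) :
    ∫ p : ℝ × ℝ, q2 f p = 0 := by
  have hi' : Integrable (q2 f) ((volume : Measure ℝ).prod volume) := by
    rwa [← Measure.volume_eq_prod]
  rw [Measure.volume_eq_prod, MeasureTheory.integral_prod _ hi']
  rw [← MeasureTheory.integral_zero ℝ ℝ]
  refine integral_congr_ae ?_
  filter_upwards [hi'.prod_right_ae] with x hx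
  refine oneD_zero (g := fun y => f (x, y)) (fun y => ?_) hx ?_ ?_
  · exact hasDerivAt_slice2 ((hf.differentiable (by simp)) (x, y)) |>.congr_deriv
      (by rw [← q2_eq_s11 ((hf.differentiable (by simp)) (x, y))])
  · exact hdec.comp ((tendsto_line2 x).mono_left le_sup_left)
  · exact hdec.comp ((tendsto_line2 x).mono_left le_sup_right)

lemma contDiff_conj {f : ℝ × ℝ → ℂ} (hf : ContDiff ℝ (⊤ : ℕ∞) f) :
    ContDiff ℝ (⊤ : ℕ∞) (fun q => (starRingEnd ℂ) (f q)) := by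
  have : (fun q => (starRingEnd ℂ) (f q)) = fun q => Complex.conjCLE (f q) := by
    funext q; simp
  rw [this]
  exact Complex.conjCLE.toContinuousLinearMap.contDiff.comp hf

lemma contDiff_Dc1 {ψ : ℝ × ℝ → ℂ} {A1 : ℝ × ℝ → ℝ}
    (hψ : ContDiff ℝ (⊤ : ℕ∞) ψ) (hA1 : ContDiff ℝ (⊤ : ℕ∞) A1) :
    ContDiff ℝ (⊤ : ℕ∞) (Dc1 A1 ψ) := by
  have heq : Dc1 A1 ψ = fun q => fderiv ℝ ψ q (1, 0) + Complex.I * (A1 q : ℂ) * ψ q :=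
    funext fun q => by simp only [Dc1, q1_eq_s11 (hψ.differentiable (by simp) q)]
  rw [heq]
  exact ((hψ.fderiv_right (by simp)).clm_apply contDiff_const).add
    ((contDiff_const.mul (Complex.ofRealCLM.contDiff.comp hA1)).mul hψ)

lemma contDiff_Dc2 {ψ : ℝ × ℝ → ℂ} {A2 : ℝ × ℝ → ℝ}
    (hψ : ContDiff ℝ (⊤ : ℕ∞) ψ) (hA2 : ContDiff ℝ (⊤ : ℕ∞) A2) :
    ContDiff ℝ (⊤ : ℕ∞) (Dc2 A2 ψ) := by
  have heq : Dc2 A2 ψ = fun q => fderiv ℝ ψ q (0, 1) + Complex.I * (A2 q : ℂ) * ψ q :=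
    funext fun q => by simp only [Dc2, q2_eq_s11 (hψ.differentiable (by simp) q)]
  rw [heq]
  exact ((hψ.fderiv_right (by simp)).clm_apply contDiff_const).add
    ((contDiff_const.mul (Complex.ofRealCLM.contDiff.comp hA2)).mul hψ)

lemma contDiff_W2 {ψ : ℝ × ℝ → ℂ} {A2 : ℝ × ℝ → ℝ}
    (hψ : ContDiff ℝ (⊤ : ℕ∞) ψ) (hA2 : ContDiff ℝ (⊤ : ℕ∞) A2) :
    ContDiff ℝ (⊤ : ℕ∞) (fun q => ((starRingEnd ℂ) (ψ q) * Dc2 A2 ψ q).im) :=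
  Complex.imCLM.contDiff.comp ((contDiff_conj hψ).mul (contDiff_Dc2 hψ hA2))

lemma contDiff_W1 {ψ : ℝ × ℝ → ℂ} {A1 : ℝ × ℝ → ℝ}
    (hψ : ContDiff ℝ (⊤ : ℕ∞) ψ) (hA1 : ContDiff ℝ (⊤ : ℕ∞) A1) :
    ContDiff ℝ (⊤ : ℕ∞) (fun q => ((starRingEnd ℂ) (ψ q) * Dc1 A1 ψ q).im) :=
  Complex.imCLM.contDiff.comp ((contDiff_conj hψ).mul (contDiff_Dc1 hψ hA1))

lemma key (ψ : ℝ × ℝ → ℂ) (A1 A2 : ℝ × ℝ → ℝ)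
    (hψ : ContDiff ℝ (⊤ : ℕ∞) ψ) (hA1 : ContDiff ℝ (⊤ : ℕ∞) A1) (hA2 : ContDiff ℝ (⊤ : ℕ∞) A2) (p : ℝ × ℝ) :
    q1 (fun q => ((starRingEnd ℂ) (ψ q) * Dc2 A2 ψ q).im) p
      - q2 (fun q => ((starRingEnd ℂ) (ψ q) * Dc1 A1 ψ q).im) p
    = 2 * ((starRingEnd ℂ) (Dc1 A1 ψ p) * Dc2 A2 ψ p).im
        + Complex.normSq (ψ p) * curvF A1 A2 p := by
  obtain ⟨x, y⟩ := p
  have hψd : Differentiable ℝ ψ := hψ.differentiable (by simp)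
  have hA1d : Differentiable ℝ A1 := hA1.differentiable (by simp)
  have hA2d : Differentiable ℝ A2 := hA2.differentiable (by simp)
  set F1 : ℝ × ℝ → ℂ := fun q => fderiv ℝ ψ q (1, 0) with hF1def
  set F2 : ℝ × ℝ → ℂ := fun q => fderiv ℝ ψ q (0, 1) with hF2def
  have hq1ψ : q1 ψ = F1 := funext fun q => q1_eq_s11 (hψd q)
  have hq2ψ : q2 ψ = F2 := funext fun q => q2_eq_s11 (hψd q)
  have hfdψ : ContDiff ℝ (⊤ : ℕ∞) (fderiv ℝ ψ) := hψ.fderiv_right (by simp)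
  have hF1s : ContDiff ℝ (⊤ : ℕ∞) F1 := hfdψ.clm_apply contDiff_const
  have hF2s : ContDiff ℝ (⊤ : ℕ∞) F2 := hfdψ.clm_apply contDiff_const
  -- symmetry of second derivatives
  have hsym := (hψ.contDiffAt.of_le (WithTop.coe_le_coe.mpr le_top) :
    ContDiffAt ℝ 2 ψ (x, y)).isSymmSndFDerivAt (by simp)
  have hmix : fderiv ℝ F2 (x, y) (1, 0) = fderiv ℝ F1 (x, y) (0, 1) := by
    rw [hF1def, hF2def, fderiv_clm_apply (hfdψ.differentiable (by simp) _)
        (differentiableAt_const _),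
      fderiv_clm_apply (hfdψ.differentiable (by simp) _) (differentiableAt_const _)]
    simpa using hsym.eq (1, 0) (0, 1)
  -- scalar abbreviations
  set c0 := ψ (x, y)
  set c1 := fderiv ℝ ψ (x, y) (1, 0) with hc1
  set c2 := fderiv ℝ ψ (x, y) (0, 1) with hc2
  set m := fderiv ℝ F2 (x, y) (1, 0) with hm
  set a0 := A1 (x, y)
  set a2 := fderiv ℝ A1 (x, y) (0, 1) with ha2
  set b0 := A2 (x, y)
  set b1 := fderiv ℝ A2 (x, y) (1, 0) with hb1
  -- slice derivatives in direction 1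
  have hd_ψ1 : HasDerivAt (fun s => ψ (s, y)) c1 x := hasDerivAt_slice1 (hψd _)
  have hd_conj1 : HasDerivAt (fun s => (starRingEnd ℂ) (ψ (s, y))) ((starRingEnd ℂ) c1) x := by
    simpa [Function.comp_def, Complex.conjCAE_apply] using Complex.conjCLE.toContinuousLinearMap.hasFDerivAt.comp_hasDerivAt x hd_ψ1
  have hd_F2 : HasDerivAt (fun s => F2 (s, y)) m x :=
    hasDerivAt_slice1 (hF2s.differentiable (by simp) _)
  have hd_A2 : HasDerivAt (fun s => ((A2 (s, y) : ℝ) : ℂ)) (b1 : ℂ) x :=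
    (hasDerivAt_slice1 (hA2d _)).ofReal_comp
  have hd_D2 : HasDerivAt (fun s => Dc2 A2 ψ (s, y))
      (m + ((Complex.I * (b1 : ℂ)) * c0 + (Complex.I * (b0 : ℂ)) * c1)) x := by
    have h := hd_F2.add ((hd_A2.const_mul Complex.I).mul hd_ψ1)
    simp only [Dc2, hq2ψ]
    exact h
  have him1 : HasDerivAt (fun s => ((starRingEnd ℂ) (ψ (s, y)) * Dc2 A2 ψ (s, y)).im)
      (((starRingEnd ℂ) c1 * Dc2 A2 ψ (x, y)
        + (starRingEnd ℂ) c0 * (m + ((Complex.I * (b1 : ℂ)) * c0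
          + (Complex.I * (b0 : ℂ)) * c1))).im) x := by
    simpa only [Function.comp_def, Pi.mul_apply, Complex.imCLM_apply] using
      Complex.imCLM.hasFDerivAt.comp_hasDerivAt x (hd_conj1.mul hd_D2)
  -- slice derivatives in direction 2
  have hd_ψ2 : HasDerivAt (fun t => ψ (x, t)) c2 y := hasDerivAt_slice2 (hψd _)
  have hd_conj2 : HasDerivAt (fun t => (starRingEnd ℂ) (ψ (x, t))) ((starRingEnd ℂ) c2) y := by
    simpa [Function.comp_def, Complex.conjCAE_apply] using Complex.conjCLE.toContinuousLinearMap.hasFDerivAt.comp_hasDerivAt y hd_ψ2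
  have hd_F1 : HasDerivAt (fun t => F1 (x, t)) (fderiv ℝ F1 (x, y) (0, 1)) y :=
    hasDerivAt_slice2 (hF1s.differentiable (by simp) _)
  have hd_A1 : HasDerivAt (fun t => ((A1 (x, t) : ℝ) : ℂ)) (a2 : ℂ) y :=
    (hasDerivAt_slice2 (hA1d _)).ofReal_comp
  have hd_D1 : HasDerivAt (fun t => Dc1 A1 ψ (x, t))
      (fderiv ℝ F1 (x, y) (0, 1) + ((Complex.I * (a2 : ℂ)) * c0
        + (Complex.I * (a0 : ℂ)) * c2)) y := by
    have h := hd_F1.add ((hd_A1.const_mul Complex.I).mul hd_ψ2)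
    simp only [Dc1, hq1ψ]
    exact h
  have him2 : HasDerivAt (fun t => ((starRingEnd ℂ) (ψ (x, t)) * Dc1 A1 ψ (x, t)).im)
      (((starRingEnd ℂ) c2 * Dc1 A1 ψ (x, y)
        + (starRingEnd ℂ) c0 * (fderiv ℝ F1 (x, y) (0, 1)
          + ((Complex.I * (a2 : ℂ)) * c0 + (Complex.I * (a0 : ℂ)) * c2))).im) y := by
    simpa only [Function.comp_def, Pi.mul_apply, Complex.imCLM_apply] using
      Complex.imCLM.hasFDerivAt.comp_hasDerivAt y (hd_conj2.mul hd_D1)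
  -- values of the two partials
  have e1 : q1 (fun q => ((starRingEnd ℂ) (ψ q) * Dc2 A2 ψ q).im) (x, y) = _ := him1.deriv
  have e2 : q2 (fun q => ((starRingEnd ℂ) (ψ q) * Dc1 A1 ψ q).im) (x, y) = _ := him2.deriv
  rw [e1, e2]
  -- values of covariant derivatives and curvature at the point
  have hD1 : Dc1 A1 ψ (x, y) = c1 + Complex.I * (a0 : ℂ) * c0 := by
    simp only [Dc1, hq1ψ]; rfl
  have hD2 : Dc2 A2 ψ (x, y) = c2 + Complex.I * (b0 : ℂ) * c0 := by
    simp only [Dc2, hq2ψ]; rfl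
  have hcurvv : curvF A1 A2 (x, y) = b1 - a2 := by
    simp only [curvF, q1_eq_s11 (hA2d _), q2_eq_s11 (hA1d _), hb1, ha2]
  rw [hD1, hD2, hcurvv, ← hmix]
  simp only [Complex.add_im, Complex.mul_im, Complex.mul_re, Complex.conj_re, Complex.conj_im,
    Complex.I_re, Complex.I_im, Complex.ofReal_re, Complex.ofReal_im, Complex.normSq_apply,
    Complex.add_re]
  ring

theorem stmt11 (ψ1 ψ2 : ℝ × ℝ → ℂ) (A1 A2 : ℝ × ℝ → ℝ) (μ : ℝ)
    (hμ : μ = 1 ∨ μ = -1)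
    (hψ1 : ContDiff ℝ (⊤ : ℕ∞) ψ1) (hψ2 : ContDiff ℝ (⊤ : ℕ∞) ψ2)
    (hA1 : ContDiff ℝ (⊤ : ℕ∞) A1) (hA2 : ContDiff ℝ (⊤ : ℕ∞) A2)
    (hcomp : ∀ p, Dc1 A1 ψ2 p = Dc2 A2 ψ1 p)
    (hcurv : ∀ p, curvF A1 A2 p = μ * ((starRingEnd ℂ) (ψ2 p) * ψ1 p).im)
    -- rapid decay: the Hamiltonian density is integrable, and the vector field
    -- whose curl it equals is integrable with integrable derivatives and decays
    (hIntH : Integrable (fun p : ℝ × ℝ =>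
      -(((starRingEnd ℂ) (Dc1 A1 ψ2 p) * Dc1 A1 ψ1 p).im
          + ((starRingEnd ℂ) (Dc2 A2 ψ2 p) * Dc2 A2 ψ1 p).im)
        + (1 / 2) * (Complex.normSq (ψ1 p) + Complex.normSq (ψ2 p)) * curvF A1 A2 p))
    (hIntV1 : Integrable (fun p : ℝ × ℝ => ((starRingEnd ℂ) (ψ1 p) * Dc2 A2 ψ1 p).im
        + ((starRingEnd ℂ) (ψ2 p) * Dc2 A2 ψ2 p).im))
    (hIntV2 : Integrable (fun p : ℝ × ℝ => ((starRingEnd ℂ) (ψ1 p) * Dc1 A1 ψ1 p).im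
        + ((starRingEnd ℂ) (ψ2 p) * Dc1 A1 ψ2 p).im))
    (hIntD1 : Integrable (q1 (fun q : ℝ × ℝ => ((starRingEnd ℂ) (ψ1 q) * Dc2 A2 ψ1 q).im
        + ((starRingEnd ℂ) (ψ2 q) * Dc2 A2 ψ2 q).im)))
    (hIntD2 : Integrable (q2 (fun q : ℝ × ℝ => ((starRingEnd ℂ) (ψ1 q) * Dc1 A1 ψ1 q).im
        + ((starRingEnd ℂ) (ψ2 q) * Dc1 A1 ψ2 q).im)))
    (hdec1 : Tendsto (fun p : ℝ × ℝ => ((starRingEnd ℂ) (ψ1 p) * Dc2 A2 ψ1 p).im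
        + ((starRingEnd ℂ) (ψ2 p) * Dc2 A2 ψ2 p).im) (cocompact (ℝ × ℝ)) (nhds 0))
    (hdec2 : Tendsto (fun p : ℝ × ℝ => ((starRingEnd ℂ) (ψ1 p) * Dc1 A1 ψ1 p).im
        + ((starRingEnd ℂ) (ψ2 p) * Dc1 A1 ψ2 p).im) (cocompact (ℝ × ℝ)) (nhds 0)) :
    ∫ p : ℝ × ℝ,
      (-(((starRingEnd ℂ) (Dc1 A1 ψ2 p) * Dc1 A1 ψ1 p).im
          + ((starRingEnd ℂ) (Dc2 A2 ψ2 p) * Dc2 A2 ψ1 p).im)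
        + (1 / 2) * (Complex.normSq (ψ1 p) + Complex.normSq (ψ2 p)) * curvF A1 A2 p)
      = 0 := by
  set V1 : ℝ × ℝ → ℝ := fun q => ((starRingEnd ℂ) (ψ1 q) * Dc2 A2 ψ1 q).im
        + ((starRingEnd ℂ) (ψ2 q) * Dc2 A2 ψ2 q).im with hV1def
  set V2 : ℝ × ℝ → ℝ := fun q => ((starRingEnd ℂ) (ψ1 q) * Dc1 A1 ψ1 q).im
        + ((starRingEnd ℂ) (ψ2 q) * Dc1 A1 ψ2 q).im with hV2def
  have hV1s : ContDiff ℝ (⊤ : ℕ∞) V1 := (contDiff_W2 hψ1 hA2).add (contDiff_W2 hψ2 hA2)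
  have hV2s : ContDiff ℝ (⊤ : ℕ∞) V2 := (contDiff_W1 hψ1 hA1).add (contDiff_W1 hψ2 hA1)
  have hz1 : ∫ p : ℝ × ℝ, q1 V1 p = 0 := int_q1_zero hV1s hIntD1 hdec1
  have hz2 : ∫ p : ℝ × ℝ, q2 V2 p = 0 := int_q2_zero hV2s hIntD2 hdec2
  have hpt : ∀ p : ℝ × ℝ,
      (-(((starRingEnd ℂ) (Dc1 A1 ψ2 p) * Dc1 A1 ψ1 p).im
          + ((starRingEnd ℂ) (Dc2 A2 ψ2 p) * Dc2 A2 ψ1 p).im)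
        + (1 / 2) * (Complex.normSq (ψ1 p) + Complex.normSq (ψ2 p)) * curvF A1 A2 p)
      = (1 / 2) * (q1 V1 p - q2 V2 p) := by
    intro p
    have hsplit1 : q1 V1 p = q1 (fun q => ((starRingEnd ℂ) (ψ1 q) * Dc2 A2 ψ1 q).im) p
        + q1 (fun q => ((starRingEnd ℂ) (ψ2 q) * Dc2 A2 ψ2 q).im) p := by
      rw [hV1def]
      exact q1_add ((contDiff_W2 hψ1 hA2).differentiable (by simp) p)
        ((contDiff_W2 hψ2 hA2).differentiable (by simp) p)
    have hsplit2 : q2 V2 p = q2 (fun q => ((starRingEnd ℂ) (ψ1 q) * Dc1 A1 ψ1 q).im) p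
        + q2 (fun q => ((starRingEnd ℂ) (ψ2 q) * Dc1 A1 ψ2 q).im) p := by
      rw [hV2def]
      exact q2_add ((contDiff_W1 hψ1 hA1).differentiable (by simp) p)
        ((contDiff_W1 hψ2 hA1).differentiable (by simp) p)
    have k1 := key ψ1 A1 A2 hψ1 hA1 hA2 p
    have k2 := key ψ2 A1 A2 hψ2 hA1 hA2 p
    have hcmb : q1 V1 p - q2 V2 p
        = 2 * ((starRingEnd ℂ) (Dc1 A1 ψ1 p) * Dc2 A2 ψ1 p).im
            + Complex.normSq (ψ1 p) * curvF A1 A2 p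
          + (2 * ((starRingEnd ℂ) (Dc1 A1 ψ2 p) * Dc2 A2 ψ2 p).im
            + Complex.normSq (ψ2 p) * curvF A1 A2 p) := by
      rw [hsplit1, hsplit2, ← k1, ← k2]; ring
    rw [hcmb, hcomp p]
    set z1 := Dc1 A1 ψ1 p
    set w1 := Dc2 A2 ψ1 p
    set w2 := Dc2 A2 ψ2 p
    simp only [Complex.mul_im, Complex.conj_re, Complex.conj_im]
    ring
  calc ∫ p : ℝ × ℝ,
      (-(((starRingEnd ℂ) (Dc1 A1 ψ2 p) * Dc1 A1 ψ1 p).im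
          + ((starRingEnd ℂ) (Dc2 A2 ψ2 p) * Dc2 A2 ψ1 p).im)
        + (1 / 2) * (Complex.normSq (ψ1 p) + Complex.normSq (ψ2 p)) * curvF A1 A2 p)
      = ∫ p : ℝ × ℝ, (1 / 2) * (q1 V1 p - q2 V2 p) := by
        exact integral_congr_ae (Filter.Eventually.of_forall hpt)
    _ = (1 / 2) * ((∫ p : ℝ × ℝ, q1 V1 p) - ∫ p : ℝ × ℝ, q2 V2 p) := by
        rw [MeasureTheory.integral_const_mul, MeasureTheory.integral_sub hIntD1 hIntD2]
    _ = 0 := by rw [hz1, hz2]; ring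
end
end

section
/- Let (φ, A_0, A_1, A_2) be a smooth solution of the Chern-Simons-Schrödinger system with critical coupling: D_t φ = i D_ℓ D_ℓ φ + (i/2)|φ|^2 φ, F_{01} = −Im(conj(φ) D_2 φ), F_{02} = Im(conj(φ) D_1 φ), F_{12} = −(1/2)|φ|^2. Define T_{00} = (1/2)|φ|^2, T_{0j} = Im(conj(φ) D_j φ), T_{jk} = 2 Re(conj(D_j φ) D_k φ) − δ_{jk}(T_{00} + Δ)T_{00}. Then the exact conservation law ∂_t T_{0j} + ∂_k T_{jk} = 0 holds for j = 1, 2. -/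
noncomputable section
open Complex MeasureTheory Filter

/-- Partial derivative in the time direction on `ℝ × ℝ × ℝ` (coords `(t, x¹, x²)`). -/
def P0 {E : Type*} [NormedAddCommGroup E] [NormedSpace ℝ E]
    (f : ℝ × ℝ × ℝ → E) (p : ℝ × ℝ × ℝ) : E := deriv (fun s => f (s, p.2)) p.1

/-- Partial derivative in the `x¹` direction. -/
def P1 {E : Type*} [NormedAddCommGroup E] [NormedSpace ℝ E]
    (f : ℝ × ℝ × ℝ → E) (p : ℝ × ℝ × ℝ) : E := deriv (fun s => f (p.1, s, p.2.2)) p.2.1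

/-- Partial derivative in the `x²` direction. -/
def P2 {E : Type*} [NormedAddCommGroup E] [NormedSpace ℝ E]
    (f : ℝ × ℝ × ℝ → E) (p : ℝ × ℝ × ℝ) : E := deriv (fun s => f (p.1, p.2.1, s)) p.2.2

/-- Covariant derivative `D₀ = ∂ₜ + i A₀`. -/
def CD0 (A0 : ℝ × ℝ × ℝ → ℝ) (f : ℝ × ℝ × ℝ → ℂ) (p : ℝ × ℝ × ℝ) : ℂ :=
  P0 f p + Complex.I * (A0 p : ℂ) * f p

/-- Covariant derivative `D₁ = ∂₁ + i A₁`. -/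
def CD1 (A1 : ℝ × ℝ × ℝ → ℝ) (f : ℝ × ℝ × ℝ → ℂ) (p : ℝ × ℝ × ℝ) : ℂ :=
  P1 f p + Complex.I * (A1 p : ℂ) * f p

/-- Covariant derivative `D₂ = ∂₂ + i A₂`. -/
def CD2 (A2 : ℝ × ℝ × ℝ → ℝ) (f : ℝ × ℝ × ℝ → ℂ) (p : ℝ × ℝ × ℝ) : ℂ :=
  P2 f p + Complex.I * (A2 p : ℂ) * f p

/-- Curvature `F₀₁ = ∂₀A₁ − ∂₁A₀`. -/
def F01 (A0 A1 : ℝ × ℝ × ℝ → ℝ) (p : ℝ × ℝ × ℝ) : ℝ := P0 A1 p - P1 A0 p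

/-- Curvature `F₀₂ = ∂₀A₂ − ∂₂A₀`. -/
def F02 (A0 A2 : ℝ × ℝ × ℝ → ℝ) (p : ℝ × ℝ × ℝ) : ℝ := P0 A2 p - P2 A0 p

/-- Curvature `F₁₂ = ∂₁A₂ − ∂₂A₁`. -/
def F12 (A1 A2 : ℝ × ℝ × ℝ → ℝ) (p : ℝ × ℝ × ℝ) : ℝ := P1 A2 p - P2 A1 p

/-- `T₀₀ = (1/2)|φ|²`. -/
def cT00 (φ : ℝ × ℝ × ℝ → ℂ) : ℝ × ℝ × ℝ → ℝ := fun q => (1 / 2) * Complex.normSq (φ q)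

/-- `T₀₁ = Im(φ̄ D₁φ)`. -/
def cT01 (φ : ℝ × ℝ × ℝ → ℂ) (A1 : ℝ × ℝ × ℝ → ℝ) : ℝ × ℝ × ℝ → ℝ :=
  fun q => ((starRingEnd ℂ) (φ q) * CD1 A1 φ q).im

/-- `T₀₂ = Im(φ̄ D₂φ)`. -/
def cT02 (φ : ℝ × ℝ × ℝ → ℂ) (A2 : ℝ × ℝ × ℝ → ℝ) : ℝ × ℝ × ℝ → ℝ :=
  fun q => ((starRingEnd ℂ) (φ q) * CD2 A2 φ q).im

/-- spatial Laplacian of `T₀₀`. -/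
def lapT00 (φ : ℝ × ℝ × ℝ → ℂ) : ℝ × ℝ × ℝ → ℝ :=
  fun q => P1 (P1 (cT00 φ)) q + P2 (P2 (cT00 φ)) q

/-- `T₁₁ = 2|D₁φ|² − T₀₀² − ΔT₀₀`. -/
def cT11 (φ : ℝ × ℝ × ℝ → ℂ) (A1 : ℝ × ℝ × ℝ → ℝ) : ℝ × ℝ × ℝ → ℝ :=
  fun q => 2 * Complex.normSq (CD1 A1 φ q) - (cT00 φ q) ^ 2 - lapT00 φ q

/-- `T₁₂ = 2 Re(conj(D₁φ) D₂φ)`. -/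
def cT12 (φ : ℝ × ℝ × ℝ → ℂ) (A1 A2 : ℝ × ℝ × ℝ → ℝ) : ℝ × ℝ × ℝ → ℝ :=
  fun q => 2 * ((starRingEnd ℂ) (CD1 A1 φ q) * CD2 A2 φ q).re

/-- `T₂₂ = 2|D₂φ|² − T₀₀² − ΔT₀₀`. -/
def cT22 (φ : ℝ × ℝ × ℝ → ℂ) (A2 : ℝ × ℝ × ℝ → ℝ) : ℝ × ℝ × ℝ → ℝ :=
  fun q => 2 * Complex.normSq (CD2 A2 φ q) - (cT00 φ q) ^ 2 - lapT00 φ q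

/-! ### Auxiliary machinery -/

namespace CSSAux

abbrev Sp : Type := ℝ × ℝ × ℝ

/-- directional derivative -/
def DD {E : Type*} [NormedAddCommGroup E] [NormedSpace ℝ E]
    (v : Sp) (f : Sp → E) : Sp → E := fun p => fderiv ℝ f p v

variable {E : Type*} [NormedAddCommGroup E] [NormedSpace ℝ E]

@[fun_prop]
lemma contDiff_DD (v : Sp) {f : Sp → E} (hf : ContDiff ℝ (⊤ : ℕ∞) f) :
    ContDiff ℝ (⊤ : ℕ∞) (DD v f) :=
  (hf.fderiv_right (by simp)).clm_apply contDiff_const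

@[fun_prop]
lemma cd_re {f : Sp → ℂ} (hf : ContDiff ℝ (⊤ : ℕ∞) f) : ContDiff ℝ (⊤ : ℕ∞) (fun q => (f q).re) :=
  Complex.reCLM.contDiff.comp hf

@[fun_prop]
lemma cd_im {f : Sp → ℂ} (hf : ContDiff ℝ (⊤ : ℕ∞) f) : ContDiff ℝ (⊤ : ℕ∞) (fun q => (f q).im) :=
  Complex.imCLM.contDiff.comp hf

@[fun_prop]
lemma cd_ofReal {f : Sp → ℝ} (hf : ContDiff ℝ (⊤ : ℕ∞) f) :
    ContDiff ℝ (⊤ : ℕ∞) (fun q => ((f q : ℝ) : ℂ)) :=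
  Complex.ofRealCLM.contDiff.comp hf

@[fun_prop]
lemma cd_conj {f : Sp → ℂ} (hf : ContDiff ℝ (⊤ : ℕ∞) f) :
    ContDiff ℝ (⊤ : ℕ∞) (fun q => (starRingEnd ℂ) (f q)) :=
  Complex.conjCLE.toContinuousLinearMap.contDiff.comp hf

lemma P0_DD {f : Sp → E} (hf : ContDiff ℝ (⊤ : ℕ∞) f) : P0 f = DD (1,0,0) f := by
  funext p
  have h1 : HasDerivAt (fun s : ℝ => ((s, p.2) : Sp)) ((1:ℝ),(0:ℝ),(0:ℝ)) p.1 :=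
    (hasDerivAt_id p.1).prodMk (hasDerivAt_const _ _)
  exact (((hf.differentiable (by simp) p).hasFDerivAt).comp_hasDerivAt p.1 h1).deriv

lemma P1_DD {f : Sp → E} (hf : ContDiff ℝ (⊤ : ℕ∞) f) : P1 f = DD (0,1,0) f := by
  funext p
  have h1 : HasDerivAt (fun s : ℝ => ((p.1, s, p.2.2) : Sp)) ((0:ℝ),(1:ℝ),(0:ℝ)) p.2.1 :=
    (hasDerivAt_const _ _).prodMk ((hasDerivAt_id _).prodMk (hasDerivAt_const _ _))
  exact (((hf.differentiable (by simp) p).hasFDerivAt).comp_hasDerivAt p.2.1 h1).deriv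

lemma P2_DD {f : Sp → E} (hf : ContDiff ℝ (⊤ : ℕ∞) f) : P2 f = DD (0,0,1) f := by
  funext p
  have h1 : HasDerivAt (fun s : ℝ => ((p.1, p.2.1, s) : Sp)) ((0:ℝ),(0:ℝ),(1:ℝ)) p.2.2 :=
    (hasDerivAt_const _ _).prodMk ((hasDerivAt_const _ _).prodMk (hasDerivAt_id _))
  exact (((hf.differentiable (by simp) p).hasFDerivAt).comp_hasDerivAt p.2.2 h1).deriv

@[fun_prop]
lemma contDiff_P0 {f : Sp → E} (hf : ContDiff ℝ (⊤ : ℕ∞) f) : ContDiff ℝ (⊤ : ℕ∞) (P0 f) := by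
  rw [P0_DD hf]; exact contDiff_DD _ hf
@[fun_prop]
lemma contDiff_P1 {f : Sp → E} (hf : ContDiff ℝ (⊤ : ℕ∞) f) : ContDiff ℝ (⊤ : ℕ∞) (P1 f) := by
  rw [P1_DD hf]; exact contDiff_DD _ hf
@[fun_prop]
lemma contDiff_P2 {f : Sp → E} (hf : ContDiff ℝ (⊤ : ℕ∞) f) : ContDiff ℝ (⊤ : ℕ∞) (P2 f) := by
  rw [P2_DD hf]; exact contDiff_DD _ hf

lemma DD_add (v : Sp) {f g : Sp → E} (hf : ContDiff ℝ (⊤ : ℕ∞) f) (hg : ContDiff ℝ (⊤ : ℕ∞) g) :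
    DD v (fun q => f q + g q) = fun p => DD v f p + DD v g p := by
  funext p
  simp only [DD]
  rw [fderiv_fun_add (hf.differentiable (by simp) p) (hg.differentiable (by simp) p)]
  rfl

lemma DD_neg (v : Sp) {f : Sp → E} :
    DD v (fun q => -f q) = fun p => -DD v f p := by
  funext p; simp only [DD, fderiv_fun_neg]; rfl

lemma DD_sub (v : Sp) {f g : Sp → E} (hf : ContDiff ℝ (⊤ : ℕ∞) f) (hg : ContDiff ℝ (⊤ : ℕ∞) g) :
    DD v (fun q => f q - g q) = fun p => DD v f p - DD v g p := by
  funext p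
  simp only [DD]
  rw [fderiv_fun_sub (hf.differentiable (by simp) p) (hg.differentiable (by simp) p)]
  rfl

lemma DD_const (v : Sp) (c : E) : DD v (fun _ => c) = fun _ => 0 := by
  funext p; simp [DD]

lemma DD_mul (v : Sp) {f g : Sp → ℝ} (hf : ContDiff ℝ (⊤ : ℕ∞) f) (hg : ContDiff ℝ (⊤ : ℕ∞) g) :
    DD v (fun q => f q * g q) = fun p => DD v f p * g p + f p * DD v g p := by
  funext p
  simp only [DD]
  rw [fderiv_fun_mul (hf.differentiable (by simp) p) (hg.differentiable (by simp) p)]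
  simp only [ContinuousLinearMap.add_apply, ContinuousLinearMap.smul_apply, smul_eq_mul]
  ring

lemma DD_re (v : Sp) {f : Sp → ℂ} (hf : ContDiff ℝ (⊤ : ℕ∞) f) (p : Sp) :
    (DD v f p).re = DD v (fun q => (f q).re) p := by
  have h : (fun q => (f q).re) = (Complex.reCLM : ℂ →L[ℝ] ℝ) ∘ f := rfl
  simp only [DD, h]
  rw [fderiv_comp p (Complex.reCLM.differentiableAt) (hf.differentiable (by simp) p),
    Complex.reCLM.fderiv]
  rfl

lemma DD_im (v : Sp) {f : Sp → ℂ} (hf : ContDiff ℝ (⊤ : ℕ∞) f) (p : Sp) :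
    (DD v f p).im = DD v (fun q => (f q).im) p := by
  have h : (fun q => (f q).im) = (Complex.imCLM : ℂ →L[ℝ] ℝ) ∘ f := rfl
  simp only [DD, h]
  rw [fderiv_comp p (Complex.imCLM.differentiableAt) (hf.differentiable (by simp) p),
    Complex.imCLM.fderiv]
  rfl

lemma DD_swap (v w : Sp) {f : Sp → E} (hf : ContDiff ℝ (⊤ : ℕ∞) f) :
    DD v (DD w f) = DD w (DD v f) := by
  funext p
  have hd : DifferentiableAt ℝ (fderiv ℝ f) p :=
    ((hf.fderiv_right (m := (⊤ : ℕ∞)) (by simp)).differentiable (by simp)) p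
  have key : ∀ a b : Sp, DD a (DD b f) p = fderiv ℝ (fderiv ℝ f) p a b := by
    intro a b
    show (fderiv ℝ (fun q => fderiv ℝ f q b) p) a = _
    rw [fderiv_clm_apply hd (differentiableAt_const b)]
    simp
  rw [key, key]
  exact (hf.contDiffAt.isSymmSndFDerivAt (by rw [minSmoothness_of_isRCLikeNormedField]; exact WithTop.coe_le_coe.mpr le_top)) v w

lemma DD_swap21 {f : Sp → ℝ} (hf : ContDiff ℝ (⊤ : ℕ∞) f) :
    DD (0,0,1) (DD (0,1,0) f) = DD (0,1,0) (DD (0,0,1) f) := DD_swap _ _ hf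
lemma DD_swap01 {f : Sp → ℝ} (hf : ContDiff ℝ (⊤ : ℕ∞) f) :
    DD (1,0,0) (DD (0,1,0) f) = DD (0,1,0) (DD (1,0,0) f) := DD_swap _ _ hf
lemma DD_swap02 {f : Sp → ℝ} (hf : ContDiff ℝ (⊤ : ℕ∞) f) :
    DD (1,0,0) (DD (0,0,1) f) = DD (0,0,1) (DD (1,0,0) f) := DD_swap _ _ hf

@[fun_prop]
lemma contDiff_CD1 {A1 : Sp → ℝ} {f : Sp → ℂ} (hA : ContDiff ℝ (⊤ : ℕ∞) A1) (hf : ContDiff ℝ (⊤ : ℕ∞) f) :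
    ContDiff ℝ (⊤ : ℕ∞) (CD1 A1 f) := by
  have : CD1 A1 f = fun p => P1 f p + Complex.I * (A1 p : ℂ) * f p := rfl
  rw [this]; fun_prop

@[fun_prop]
lemma contDiff_CD2 {A2 : Sp → ℝ} {f : Sp → ℂ} (hA : ContDiff ℝ (⊤ : ℕ∞) A2) (hf : ContDiff ℝ (⊤ : ℕ∞) f) :
    ContDiff ℝ (⊤ : ℕ∞) (CD2 A2 f) := by
  have : CD2 A2 f = fun p => P2 f p + Complex.I * (A2 p : ℂ) * f p := rfl
  rw [this]; fun_prop

lemma CD1_eq (A1 : Sp → ℝ) (f : Sp → ℂ) :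
    CD1 A1 f = fun p => P1 f p + Complex.I * (A1 p : ℂ) * f p := rfl
lemma CD2_eq (A2 : Sp → ℝ) (f : Sp → ℂ) :
    CD2 A2 f = fun p => P2 f p + Complex.I * (A2 p : ℂ) * f p := rfl

lemma cT00_def (φ : Sp → ℂ) : cT00 φ = fun q => (1 / 2) * Complex.normSq (φ q) := rfl
lemma cT01_def (φ : Sp → ℂ) (A1 : Sp → ℝ) :
    cT01 φ A1 = fun q => ((starRingEnd ℂ) (φ q) * CD1 A1 φ q).im := rfl
lemma cT02_def (φ : Sp → ℂ) (A2 : Sp → ℝ) :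
    cT02 φ A2 = fun q => ((starRingEnd ℂ) (φ q) * CD2 A2 φ q).im := rfl
lemma lapT00_def (φ : Sp → ℂ) :
    lapT00 φ = fun q => P1 (P1 (cT00 φ)) q + P2 (P2 (cT00 φ)) q := rfl
lemma cT11_def (φ : Sp → ℂ) (A1 : Sp → ℝ) :
    cT11 φ A1 = fun q => 2 * Complex.normSq (CD1 A1 φ q) - (cT00 φ q) ^ 2 - lapT00 φ q := rfl
lemma cT12_def (φ : Sp → ℂ) (A1 A2 : Sp → ℝ) :
    cT12 φ A1 A2 = fun q => 2 * ((starRingEnd ℂ) (CD1 A1 φ q) * CD2 A2 φ q).re := rfl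
lemma cT22_def (φ : Sp → ℂ) (A2 : Sp → ℝ) :
    cT22 φ A2 = fun q => 2 * Complex.normSq (CD2 A2 φ q) - (cT00 φ q) ^ 2 - lapT00 φ q := rfl

end CSSAux

set_option maxHeartbeats 4000000 in
open CSSAux in
theorem stmt15 (φ : ℝ × ℝ × ℝ → ℂ) (A0 A1 A2 : ℝ × ℝ × ℝ → ℝ)
    (hφ : ContDiff ℝ (⊤ : ℕ∞) φ)
    (hA0 : ContDiff ℝ (⊤ : ℕ∞) A0) (hA1 : ContDiff ℝ (⊤ : ℕ∞) A1) (hA2 : ContDiff ℝ (⊤ : ℕ∞) A2)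
    -- critical Chern-Simons-Schrödinger system
    (hev : ∀ p, CD0 A0 φ p
      = Complex.I * (CD1 A1 (CD1 A1 φ) p + CD2 A2 (CD2 A2 φ) p)
        + (Complex.I / 2) * ((Complex.normSq (φ p) : ℝ) : ℂ) * φ p)
    (hF01 : ∀ p, F01 A0 A1 p = -((starRingEnd ℂ) (φ p) * CD2 A2 φ p).im)
    (hF02 : ∀ p, F02 A0 A2 p = ((starRingEnd ℂ) (φ p) * CD1 A1 φ p).im)
    (hF12 : ∀ p, F12 A1 A2 p = -(1 / 2) * Complex.normSq (φ p)) :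
    ∀ p : ℝ × ℝ × ℝ,
      (P0 (cT01 φ A1) p + P1 (cT11 φ A1) p + P2 (cT12 φ A1 A2) p = 0) ∧
      (P0 (cT02 φ A2) p + P1 (cT12 φ A1 A2) p + P2 (cT22 φ A2) p = 0) := by
  intro p
  have hP0φ : P0 φ = fun q => Complex.I * (CD1 A1 (CD1 A1 φ) q + CD2 A2 (CD2 A2 φ) q)
      + Complex.I * ((Complex.normSq (φ q) / 2 : ℝ) : ℂ) * φ q
      - Complex.I * (A0 q : ℂ) * φ q := by
    funext q
    have h := hev q
    simp only [CD0] at h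
    push_cast
    linear_combination h
  have HU : DD (1,0,0) (fun q => (φ q).re)
      = fun q => (Complex.I * (CD1 A1 (CD1 A1 φ) q + CD2 A2 (CD2 A2 φ) q)
      + Complex.I * ((Complex.normSq (φ q) / 2 : ℝ) : ℂ) * φ q
      - Complex.I * (A0 q : ℂ) * φ q).re := by
    funext q
    rw [← DD_re _ hφ q, ← P0_DD hφ, hP0φ]
  have HV : DD (1,0,0) (fun q => (φ q).im)
      = fun q => (Complex.I * (CD1 A1 (CD1 A1 φ) q + CD2 A2 (CD2 A2 φ) q)
      + Complex.I * ((Complex.normSq (φ q) / 2 : ℝ) : ℂ) * φ q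
      - Complex.I * (A0 q : ℂ) * φ q).im := by
    funext q
    rw [← DD_im _ hφ q, ← P0_DD hφ, hP0φ]
  have hPA1 : ∀ q, DD (1,0,0) A1 q
      = DD (0,1,0) A0 q - ((starRingEnd ℂ) (φ q) * CD2 A2 φ q).im := by
    intro q
    have h := hF01 q
    simp only [F01] at h
    rw [← P0_DD hA1, ← P1_DD hA0]
    linarith
  have hPA2 : ∀ q, DD (1,0,0) A2 q
      = DD (0,0,1) A0 q + ((starRingEnd ℂ) (φ q) * CD1 A1 φ q).im := by
    intro q
    have h := hF02 q
    simp only [F02] at h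
    rw [← P0_DD hA2, ← P2_DD hA0]
    linarith
  have hPA12 : ∀ q, DD (0,1,0) A2 q
      = DD (0,0,1) A1 q - (1/2) * Complex.normSq (φ q) := by
    intro q
    have h := hF12 q
    simp only [F12] at h
    rw [← P1_DD hA2, ← P2_DD hA1]
    linarith
  constructor
  · simp (disch := fun_prop) only [cT01_def, cT02_def, cT11_def, cT12_def, cT22_def, lapT00_def, cT00_def,
      CD1_eq, CD2_eq, P0_DD, P1_DD, P2_DD,
      DD_add, DD_sub, DD_neg, DD_mul, DD_const, DD_re, DD_im,
      DD_swap21, DD_swap01, DD_swap02,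
      HU, HV, hPA1, hPA2, hPA12,
      Complex.mul_re, Complex.mul_im, Complex.add_re, Complex.add_im,
      Complex.sub_re, Complex.sub_im, Complex.I_re, Complex.I_im,
      Complex.ofReal_re, Complex.ofReal_im, Complex.conj_re, Complex.conj_im,
      Complex.normSq_apply, pow_two, div_eq_mul_inv,
      mul_zero, zero_mul, add_zero, zero_add, mul_one, one_mul, neg_zero,
      sub_zero, neg_neg, mul_neg, neg_mul]
    ring
  · simp (disch := fun_prop) only [cT01_def, cT02_def, cT11_def, cT12_def, cT22_def,
      lapT00_def, cT00_def,
      CD1_eq, CD2_eq, P0_DD, P1_DD, P2_DD,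
      DD_add, DD_sub, DD_neg, DD_mul, DD_const, DD_re, DD_im,
      DD_swap21, DD_swap01, DD_swap02,
      HU, HV, hPA1, hPA2, hPA12,
      Complex.mul_re, Complex.mul_im, Complex.add_re, Complex.add_im,
      Complex.sub_re, Complex.sub_im, Complex.I_re, Complex.I_im,
      Complex.ofReal_re, Complex.ofReal_im, Complex.conj_re, Complex.conj_im,
      Complex.normSq_apply, pow_two, div_eq_mul_inv,
      mul_zero, zero_mul, add_zero, zero_add, mul_one, one_mul, neg_zero,
      sub_zero, neg_neg, mul_neg, neg_mul]
    ring
end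
end
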